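/- arXiv:1107.4641 — 3 statements merged into one kernel-verified Lean document; each statement's English description precedes it below -/
import Mathlib

section
/- Let A be an MV-algebra and I₁, I₂ ideals of A. If a₁, a₂ ∈ A satisfy a₁ ≡ a₂ modulo the ideal generated by I₁ ∪ I₂, then there exists a ∈ A with a ≡ a₁ (mod I₁) and a ≡ a₂ (mod I₂). -/
/-- An MV-algebra. -/
class MV (A : Type*) where
  add : A → A → A
  neg : A → A
  zero : A
  add_assoc : ∀ a b c, add (add a b) c = add a (add b c)
  add_comm : ∀ a b, add a b = add b a
  add_zero : ∀ a, add a zero = a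
  neg_neg : ∀ a, neg (neg a) = a
  add_neg_zero : ∀ a, add a (neg zero) = neg zero
  lukasiewicz : ∀ a b, add (neg (add (neg a) b)) b = add (neg (add (neg b) a)) a

namespace MV
variable {A : Type*} [MV A]
/-- a ⊖ b := ¬(¬a ⊕ b) -/
def sub (a b : A) : A := neg (add (neg a) b)
/-- a ∨ b := (a ⊖ b) ⊕ b -/
def sup (a b : A) : A := add (sub a b) b
/-- a ∧ b := ¬(¬a ∨ ¬b) -/
def inf (a b : A) : A := neg (sup (neg a) (neg b))
/-- a ≤ b iff a ⊖ b = 0 -/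
def le (a b : A) : Prop := sub a b = zero
/-- Ideal: contains 0, closed under ⊕, downward closed. -/
def IsIdeal (I : Set A) : Prop :=
  zero ∈ I ∧ (∀ a b : A, a ∈ I → b ∈ I → add a b ∈ I) ∧
    (∀ a b : A, b ∈ I → le a b → a ∈ I)
/-- Congruence modulo an ideal: x ≡ y (mod I) iff x ⊖ y ∈ I and y ⊖ x ∈ I. -/
def cong (I : Set A) (x y : A) : Prop := sub x y ∈ I ∧ sub y x ∈ I
/-- The ideal (I, J) generated by I ∪ J: elements bounded by c ⊕ d, c ∈ I, d ∈ J. -/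
def gen (I J : Set A) : Set A := {x | ∃ c ∈ I, ∃ d ∈ J, le x (add c d)}
end MV

/-! Choose `c₁, c₂ ∈ I₁` and `d₁, d₂ ∈ I₂` with `a₁ ⊖ a₂ ≤ c₁ ⊕ d₁` and `a₂ ⊖ a₁ ≤ c₂ ⊕ d₂`, and take
`a := (a₁ ⊖ c₁) ∨ (a₂ ⊖ d₂)`. Since `a ≥ a₁ ⊖ c₁` we get `a₁ ⊖ a ≤ a₁ ⊖ (a₁ ⊖ c₁) ≤ c₁`, and since
`a₁ ⊖ c₁ ≤ a₁` we get `a ⊖ a₁ ≤ (a₂ ⊖ d₂) ⊖ a₁ = (a₂ ⊖ a₁) ⊖ d₂ ≤ c₂`; so `a ≡ a₁ (mod I₁)`.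
The congruence modulo `I₂` is the same argument with the two sides exchanged. -/

namespace MV

variable {A : Type*} [MV A]

theorem zero_add (a : A) : add zero a = a := by
  rw [MV.add_comm]; exact MV.add_zero a

theorem neg_add_self (a : A) : add (neg a) a = neg zero := by
  have h := MV.lukasiewicz a (neg zero : A)
  rw [MV.add_neg_zero, MV.neg_neg, zero_add] at h
  exact h.symm

theorem one_add (a : A) : add (neg zero) a = neg zero := by
  rw [MV.add_comm]; exact MV.add_neg_zero a

theorem sup_comm (a b : A) : sup a b = sup b a := MV.lukasiewicz a b

theorem le_iff_exists_add {a b : A} : le a b ↔ ∃ c, b = add a c := by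
  constructor
  · intro h
    have hsup := sup_comm a b
    unfold sup at hsup
    rw [show sub a b = zero from h, zero_add] at hsup
    exact ⟨sub b a, hsup.trans (MV.add_comm _ _)⟩
  · rintro ⟨c, rfl⟩
    show neg (add (neg a) (add a c)) = zero
    rw [← MV.add_assoc, neg_add_self, one_add, MV.neg_neg]

theorem le_trans {a b c : A} (hab : le a b) (hbc : le b c) : le a c := by
  obtain ⟨u, rfl⟩ := le_iff_exists_add.mp hab
  obtain ⟨v, rfl⟩ := le_iff_exists_add.mp hbc
  exact le_iff_exists_add.mpr ⟨add u v, MV.add_assoc a u v⟩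

theorem add_le_add_right {a b : A} (h : le a b) (c : A) : le (add a c) (add b c) := by
  obtain ⟨u, rfl⟩ := le_iff_exists_add.mp h
  exact le_iff_exists_add.mpr ⟨u, by rw [MV.add_assoc, MV.add_comm u c, ← MV.add_assoc]⟩

theorem neg_le_neg {a b : A} (h : le a b) : le (neg b) (neg a) := by
  show neg (add (neg (neg b)) (neg a)) = zero
  rwa [MV.neg_neg, MV.add_comm]

theorem sub_le_sub_right {a b : A} (h : le a b) (c : A) : le (sub a c) (sub b c) :=
  neg_le_neg (add_le_add_right (neg_le_neg h) c)

theorem sub_le_sub_left {a b : A} (h : le a b) (c : A) : le (sub c b) (sub c a) := by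
  refine neg_le_neg ?_
  rw [MV.add_comm (neg c) a, MV.add_comm (neg c) b]
  exact add_le_add_right h (neg c)

theorem sub_right_comm (a b c : A) : sub (sub a b) c = sub (sub a c) b := by
  unfold sub
  rw [MV.neg_neg, MV.neg_neg, MV.add_assoc, MV.add_assoc, MV.add_comm b c]

theorem sub_le_self (a b : A) : le (sub a b) a := by
  show neg (add (neg (neg (add (neg a) b))) a) = zero
  rw [MV.neg_neg, MV.add_assoc, MV.add_comm b a, ← MV.add_assoc, neg_add_self, one_add,
    MV.neg_neg]

theorem sub_sub_le (a b : A) : le (sub a (sub a b)) b := by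
  show neg (add (neg (neg (add (neg a) (neg (add (neg a) b))))) b) = zero
  rw [MV.neg_neg, MV.add_assoc, MV.lukasiewicz a b, MV.add_comm (neg (add (neg b) a)) a,
    ← MV.add_assoc, neg_add_self, one_add, MV.neg_neg]

theorem add_sub_le_right (a b : A) : le (sub (add a b) b) a := by
  show neg (add (neg (neg (add (neg (add a b)) b))) a) = zero
  rw [MV.neg_neg, MV.add_assoc, MV.add_comm b a, neg_add_self, MV.neg_neg]

theorem sub_le_of_le_add {a b c : A} (h : le a (add b c)) : le (sub a c) b :=
  le_trans (sub_le_sub_right h c) (add_sub_le_right b c)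

theorem le_sup_right (a b : A) : le b (sup a b) :=
  le_iff_exists_add.mpr ⟨sub a b, MV.add_comm _ _⟩

theorem le_sup_left (a b : A) : le a (sup a b) := by
  rw [sup_comm]; exact le_sup_right b a

theorem sup_le_sup_right {a b : A} (h : le a b) (c : A) : le (sup a c) (sup b c) :=
  add_le_add_right (sub_le_sub_right h c) c

theorem sup_sub_le_of_le {a b : A} (h : le a b) (c : A) : le (sub (sup a c) b) (sub c b) := by
  refine le_trans (sub_le_sub_right (sup_le_sup_right h c) b) ?_
  rw [sup_comm]
  exact add_sub_le_right (sub c b) b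

theorem IsIdeal.mem_of_le {I : Set A} (hI : IsIdeal I) {a b : A} (hb : b ∈ I) (h : le a b) :
    a ∈ I :=
  hI.2.2 a b hb h

theorem cong_sup_sub {I : Set A} (hI : IsIdeal I) {x y c c' d : A} (hc : c ∈ I) (hc' : c' ∈ I)
    (hyx : le (sub y x) (add c' d)) : cong I (sup (sub x c) (sub y d)) x := by
  constructor
  · have hyd : le (sub (sub y d) x) c' := by
      rw [sub_right_comm]; exact sub_le_of_le_add hyx
    exact hI.mem_of_le hc' (le_trans (sup_sub_le_of_le (sub_le_self x c) _) hyd)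
  · exact hI.mem_of_le hc (le_trans (sub_le_sub_left (le_sup_left _ _) x) (sub_sub_le x c))

end MV

open MV in
theorem stmt3 {A : Type*} [MV A] {I₁ I₂ : Set A}
    (h₁ : IsIdeal I₁) (h₂ : IsIdeal I₂) (a₁ a₂ : A)
    (h : cong (gen I₁ I₂) a₁ a₂) :
    ∃ a : A, cong I₁ a a₁ ∧ cong I₂ a a₂ := by
  obtain ⟨c₁, hc₁, d₁, hd₁, h₁₂⟩ := h.1
  obtain ⟨c₂, hc₂, d₂, hd₂, h₂₁⟩ := h.2
  refine ⟨sup (sub a₁ c₁) (sub a₂ d₂), cong_sup_sub h₁ hc₁ hc₂ h₂₁, ?_⟩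
  rw [MV.sup_comm]
  exact cong_sup_sub h₂ hd₂ hd₁ (by rwa [MV.add_comm d₁])
end

section
/- For every linear polynomial g(x₁,...,xₙ) = c₀ + c₁x₁ + ... + cₙxₙ with integer coefficients, the truncated function g♯ := (g ∨ 0) ∧ 1 : [0,1]ⁿ → [0,1] is an MV term function, i.e., it lies in the MV-subalgebra of functions [0,1]ⁿ → [0,1] generated by the coordinate projections. -/
noncomputable section

/-- The unit interval [0,1]. -/
abbrev UI : Type := Set.Icc (0:ℝ) 1

/-- MV sum on [0,1]: x ⊕ y = min(x+y, 1). -/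
def oplus (x y : UI) : UI :=
  ⟨min (x.1 + y.1) 1, le_min (add_nonneg x.2.1 y.2.1) zero_le_one, min_le_right _ _⟩

/-- MV negation on [0,1]: ¬x = 1 - x. -/
def mneg (x : UI) : UI :=
  ⟨1 - x.1, by constructor <;> [linarith [x.2.2]; linarith [x.2.1]]⟩

/-- 0 in [0,1]. -/
def zeroUI : UI := ⟨0, le_refl 0, zero_le_one⟩

/-- Derived x ⊖ y = ¬(¬x ⊕ y). -/
def subUI (x y : UI) : UI := mneg (oplus (mneg x) y)

/-- MV term functions in n variables: the subalgebra of functions [0,1]ⁿ → [0,1]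
generated by the coordinate projections. -/
inductive IsTerm (n : ℕ) : ((Fin n → UI) → UI) → Prop
  | proj (i : Fin n) : IsTerm n fun x => x i
  | zero : IsTerm n fun _ => zeroUI
  | add {f g} : IsTerm n f → IsTerm n g → IsTerm n fun x => oplus (f x) (g x)
  | neg {f} : IsTerm n f → IsTerm n fun x => mneg (f x)

/-- The linear polynomial c₀ + Σ cᵢ xᵢ with integer coefficients. -/
def lin {n : ℕ} (c₀ : ℤ) (c : Fin n → ℤ) (x : Fin n → UI) : ℝ :=
  (c₀ : ℝ) + ∑ i, (c i : ℝ) * (x i).1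

/-- Truncation g♯ of a real number to [0,1]. -/
def sharp (r : ℝ) : UI :=
  ⟨max 0 (min r 1), le_max_left _ _, max_le zero_le_one (min_le_right _ _)⟩

/-! The truncation `♯` satisfies `(s + x)♯ = s♯ ⊕ (x ⊖ (-s)♯)` for every real `s` and every
`x ∈ [0,1]`. Hence, if all integer shifts of `g` and of `-g` have MV-term truncations, then so do
those of `g ± xⱼ` and of their negatives. Starting from the constants, whose truncations are `0` or
`1`, one adds the monomials `cᵢxᵢ` one unit at a time. -/

lemma sharp_add (s : ℝ) (x : UI) :
    sharp (s + x.1) = oplus (sharp s) (subUI x (sharp (-s))) := by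
  obtain ⟨x, hx0, hx1⟩ := x
  apply Subtype.ext
  simp only [sharp, oplus, subUI, mneg]
  grind

lemma sharp_sub (s : ℝ) (x : UI) :
    sharp (s - x.1) = oplus (sharp (s - 1)) (subUI (mneg x) (sharp (1 - s))) := by
  rw [← neg_sub s 1, ← sharp_add]
  simp only [mneg]
  ring_nf

lemma IsTerm.sub {n : ℕ} {f g : (Fin n → UI) → UI} (hf : IsTerm n f) (hg : IsTerm n g) :
    IsTerm n fun x => subUI (f x) (g x) :=
  .neg (.add (.neg hf) hg)

lemma isTerm_sharp_intCast (n : ℕ) (k : ℤ) : IsTerm n fun _ => sharp k := by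
  rcases le_or_gt k 0 with hk | hk
  · convert IsTerm.zero (n := n) using 2
    apply Subtype.ext
    simp only [sharp, zeroUI]
    have : (k : ℝ) ≤ 0 := by exact_mod_cast hk
    grind
  · convert IsTerm.neg (IsTerm.zero (n := n)) using 2
    apply Subtype.ext
    simp only [sharp, zeroUI, mneg]
    have : (1 : ℝ) ≤ k := by exact_mod_cast hk
    grind

def HasSharpTerms {n : ℕ} (g : (Fin n → UI) → ℝ) : Prop :=
  ∀ k : ℤ, IsTerm n fun x => sharp (g x + k)

section
variable {n : ℕ} {g : (Fin n → UI) → ℝ}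

lemma hasSharpTerms_const (m : ℤ) : HasSharpTerms (n := n) fun _ => (m : ℝ) := fun k => by
  simpa using isTerm_sharp_intCast n (m + k)

lemma HasSharpTerms.add_proj (hg : HasSharpTerms g) (hng : HasSharpTerms fun x => -g x)
    (j : Fin n) :
    HasSharpTerms fun x => g x + (x j).1 := fun k => by
  have h := (hg k).add ((IsTerm.proj j).sub (hng (-k)))
  convert h using 2 with x
  rw [add_right_comm, sharp_add]
  push_cast
  rw [neg_add]

lemma HasSharpTerms.sub_proj (hg : HasSharpTerms g) (hng : HasSharpTerms fun x => -g x)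
    (j : Fin n) :
    HasSharpTerms fun x => g x - (x j).1 := fun k => by
  have h := (hg (k - 1)).add ((IsTerm.proj j).neg.sub (hng (1 - k)))
  convert h using 2 with x
  rw [sub_add_eq_add_sub, sharp_sub]
  push_cast
  ring_nf

lemma HasSharpTerms.add_intCast_mul_proj (hg : HasSharpTerms g)
    (hng : HasSharpTerms fun x => -g x) (m : ℤ) (j : Fin n) :
    (HasSharpTerms fun x => g x + m * (x j).1) ∧ HasSharpTerms fun x => -(g x + m * (x j).1) := by
  induction m using Int.induction_on with
  | zero => simpa using ⟨hg, hng⟩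
  | succ i ih =>
    obtain ⟨h, hn⟩ := ih
    refine ⟨?_, ?_⟩
    · convert h.add_proj hn j using 2 with x; push_cast; ring
    · convert hn.sub_proj (by simpa using h) j using 2 with x; push_cast; ring
  | pred i ih =>
    obtain ⟨h, hn⟩ := ih
    refine ⟨?_, ?_⟩
    · convert h.sub_proj hn j using 2 with x; push_cast; ring
    · convert hn.add_proj (by simpa using h) j using 2 with x; push_cast; ring

lemma hasSharpTerms_sum_intCast_mul (c : Fin n → ℤ) (s : Finset (Fin n)) :
    HasSharpTerms (fun x => ∑ i ∈ s, (c i : ℝ) * (x i).1) ∧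
      HasSharpTerms fun x => -∑ i ∈ s, (c i : ℝ) * (x i).1 := by
  induction s using Finset.induction_on with
  | empty => simpa using hasSharpTerms_const (n := n) 0
  | insert j s hj ih =>
    simp only [Finset.sum_insert hj, add_comm ((c j : ℝ) * _)]
    exact ih.1.add_intCast_mul_proj ih.2 (c j) j

end

theorem stmt7 (n : ℕ) (c₀ : ℤ) (c : Fin n → ℤ) :
    IsTerm n (fun x => sharp (lin c₀ c x)) := by
  convert (hasSharpTerms_sum_intCast_mul c Finset.univ).1 c₀ using 3 with x
  rw [lin, add_comm]
end
end

section
/- Let T₁, T₂ be finitely generated ideals of the MV-algebra Aₙ of term functions on [0,1]ⁿ, and let h, h' ∈ Aₙ. If h(x) = h'(x) for all x in Z(T₁) ∩ Z(T₂) (the common zero set), then d(h, h') := (h ⊖ h') ⊕ (h' ⊖ h) belongs to the ideal generated by T₁ ∪ T₂. -/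
noncomputable section

/-- Membership in the ideal of term functions generated by a set S. -/
def InIdealGen (n : ℕ) (S : Set ((Fin n → UI) → UI)) (g : (Fin n → UI) → UI) : Prop :=
  IsTerm n g ∧ ∃ l : List ((Fin n → UI) → UI), (∀ s ∈ l, s ∈ S) ∧
    ∀ x, (g x).1 ≤ ((l.foldr (fun p q => fun x => oplus (p x) (q x)) (fun _ => zeroUI)) x).1

/-!
A term function is piecewise affine: the cube is covered by finitely many polyhedra on each of
which it agrees with an affine map. Let `g` be the `⊕`-sum of the generators of `T₁` and `T₂`; it
vanishes exactly on `Z(T₁) ∩ Z(T₂)`, where `d(h, h')` vanishes too. On a common cell of `d(h, h')`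
and `g` both are affine, and the cell is a compact polyhedron, hence (Krein–Milman) the convex
hull of its finitely many vertices. So `d(h, h') ≤ m g` on the cell as soon as it holds at the
vertices, which is the case for all large `m`. With finitely many cells one `m` works everywhere,
and then `d(h, h')` lies below the `⊕`-sum of `m` copies of the generators.
-/

open Filter Set Topology

section Polyhedron

variable {E : Type*} [AddCommGroup E] [Module ℝ E]

def polyhedron (s : Finset (E →ᵃ[ℝ] ℝ)) : Set E := {x | ∀ a ∈ s, a x ≤ 0}

lemma polyhedron_union [DecidableEq (E →ᵃ[ℝ] ℝ)] (s t : Finset (E →ᵃ[ℝ] ℝ)) :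
    polyhedron (s ∪ t) = polyhedron s ∩ polyhedron t := by
  ext x
  simp [polyhedron, or_imp, forall_and]

lemma polyhedron_singleton (a : E →ᵃ[ℝ] ℝ) : polyhedron {a} = {x | a x ≤ 0} := by
  simp [polyhedron]

lemma convex_polyhedron (s : Finset (E →ᵃ[ℝ] ℝ)) : Convex ℝ (polyhedron s) := by
  have : polyhedron s = ⋂ a ∈ s, a ⁻¹' Iic 0 := by ext x; simp [polyhedron]
  rw [this]
  exact convex_iInter₂ fun a _ => (convex_Iic 0).affine_preimage a

lemma isClosed_polyhedron [TopologicalSpace E] [IsTopologicalAddGroup E] [ContinuousSMul ℝ E]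
    [T2Space E] [FiniteDimensional ℝ E] (s : Finset (E →ᵃ[ℝ] ℝ)) : IsClosed (polyhedron s) := by
  have : polyhedron s = ⋂ a ∈ s, a ⁻¹' Iic 0 := by ext x; simp [polyhedron]
  rw [this]
  exact isClosed_biInter fun a _ => isClosed_Iic.preimage
    (AffineMap.continuous_linear_iff.1 (LinearMap.continuous_of_finiteDimensional _))

/-- Going from `y` through `x` a little beyond `x` keeps the constraints that are slack at `x`
satisfied, and those tight at `x` stay tight along the whole line. -/
lemma eq_of_mem_extremePoints_polyhedron {s : Finset (E →ᵃ[ℝ] ℝ)} {x y : E}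
    (hx : x ∈ (polyhedron s).extremePoints ℝ) (hy : y ∈ polyhedron s)
    (hxy : ∀ a ∈ s, a x = 0 → a y = 0) : y = x := by
  have hbeyond : ∀ᶠ t in 𝓝[>] (1 : ℝ), AffineMap.lineMap y x t ∈ polyhedron s := by
    simp only [polyhedron, mem_ofPred_eq, eventually_all_finset, AffineMap.apply_lineMap]
    intro a ha
    rcases (hx.1 a ha).lt_or_eq with hlt | heq
    · have hcont : Tendsto (AffineMap.lineMap (a y) (a x) : ℝ → ℝ) (𝓝[>] 1) (𝓝 (a x)) := by
        simpa using (AffineMap.lineMap_continuous.tendsto (1 : ℝ)).mono_left nhdsWithin_le_nhds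
      exact (hcont.eventually (gt_mem_nhds hlt)).mono fun _ => le_of_lt
    · simp [heq, hxy a ha heq]
  obtain ⟨t, hzt, ht⟩ := (hbeyond.and self_mem_nhdsWithin).exists
  have hseg : x ∈ openSegment ℝ y (AffineMap.lineMap y x t) := by
    rw [openSegment_eq_image_lineMap]
    refine ⟨t⁻¹, ⟨by positivity, inv_lt_one_of_one_lt₀ ht⟩, ?_⟩
    rw [AffineMap.lineMap_lineMap_right, inv_mul_cancel₀ (by positivity),
      AffineMap.lineMap_apply_one]
  exact hx.2 hy hzt hseg

lemma finite_extremePoints_polyhedron (s : Finset (E →ᵃ[ℝ] ℝ)) :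
    ((polyhedron s).extremePoints ℝ).Finite := by
  refine Finite.of_finite_image (f := fun x => {a ∈ (s : Set (E →ᵃ[ℝ] ℝ)) | a x = 0})
    (s.finite_toSet.powerset.subset ?_) fun x hx y hy hxy => ?_
  · rintro _ ⟨x, -, rfl⟩ a ha
    exact ha.1
  · exact (eq_of_mem_extremePoints_polyhedron hx hy.1 fun a ha hax =>
      ((Set.ext_iff.1 hxy a).1 ⟨ha, hax⟩).2).symm

end Polyhedron

section KreinMilman

variable {E : Type*} [AddCommGroup E] [Module ℝ E] [TopologicalSpace E] [T2Space E]
  [IsTopologicalAddGroup E] [ContinuousSMul ℝ E] [LocallyConvexSpace ℝ E]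

lemma eventually_le_natCast_mul_of_extremePoints {K : Set E} (hK : IsCompact K)
    (hKconv : Convex ℝ K) (hext : (K.extremePoints ℝ).Finite) (p q : E →ᵃ[ℝ] ℝ)
    (hq : ∀ v ∈ K.extremePoints ℝ, 0 ≤ q v) (hpq : ∀ v ∈ K.extremePoints ℝ, q v = 0 → p v = 0) :
    ∀ᶠ m : ℕ in atTop, ∀ x ∈ K, p x ≤ m * q x := by
  have hvert : ∀ᶠ m : ℕ in atTop, ∀ v ∈ K.extremePoints ℝ, p v ≤ m * q v := by
    refine (eventually_all_finite hext).2 fun v hv => ?_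
    rcases (hq v hv).eq_or_lt with hzero | hpos
    · simp [← hzero, hpq v hv hzero.symm]
    · exact (tendsto_natCast_atTop_atTop.atTop_mul_const hpos).eventually_ge_atTop (p v)
  have hhull : K = convexHull ℝ (K.extremePoints ℝ) := by
    rw [← (hext.isCompact_convexHull ℝ).isClosed.closure_eq,
      closure_convexHull_extremePoints hK hKconv]
  refine hvert.mono fun m hm x hx => ?_
  have hconv : Convex ℝ {x | p x ≤ m * q x} := by
    have : {x | p x ≤ m * q x} = (p - (m : ℝ) • q) ⁻¹' Iic 0 := by
      ext x; simp
    rw [this]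
    exact (convex_Iic 0).affine_preimage _
  rw [hhull] at hx
  exact convexHull_min hm hconv hx

end KreinMilman

section PiecewiseAffine

open scoped Classical

variable {n : ℕ}

local notation "𝔸" n:max => (Fin n → ℝ) →ᵃ[ℝ] ℝ

def realPoint (x : Fin n → UI) : Fin n → ℝ := fun i => x i

def cubeConstraints (n : ℕ) : Finset (𝔸 n) :=
  Finset.univ.image (fun i => -(LinearMap.proj i).toAffineMap) ∪
    Finset.univ.image (fun i => (LinearMap.proj i).toAffineMap - AffineMap.const ℝ _ (1 : ℝ))

lemma mem_polyhedron_cubeConstraints {v : Fin n → ℝ} :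
    v ∈ polyhedron (cubeConstraints n) ↔ ∀ i, v i ∈ Icc (0 : ℝ) 1 := by
  simp [polyhedron, cubeConstraints, or_imp, forall_and]

lemma range_realPoint : range (realPoint (n := n)) = polyhedron (cubeConstraints n) := by
  ext v
  rw [mem_polyhedron_cubeConstraints]
  refine ⟨?_, fun hv => ⟨fun i => ⟨v i, hv i⟩, rfl⟩⟩
  rintro ⟨x, rfl⟩ i
  exact (x i).2

lemma isCompact_polyhedron_cubeConstraints_union (s : Finset (𝔸 n)) :
    IsCompact (polyhedron (cubeConstraints n ∪ s)) := by
  refine (isCompact_univ_pi fun _ => isCompact_Icc (a := (0 : ℝ)) (b := 1)).of_isClosed_subset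
    (isClosed_polyhedron _) fun v hv i _ => ?_
  rw [polyhedron_union] at hv
  exact mem_polyhedron_cubeConstraints.1 hv.1 i

def IsPiecewiseAffine (f : (Fin n → UI) → UI) : Prop :=
  ∃ cells : Finset (Finset (𝔸 n) × 𝔸 n),
    (∀ x, ∃ c ∈ cells, realPoint x ∈ polyhedron c.1) ∧
    ∀ c ∈ cells, ∀ x, realPoint x ∈ polyhedron c.1 → (f x : ℝ) = c.2 (realPoint x)

lemma isPiecewiseAffine_of_eq_affine {f : (Fin n → UI) → UI} (a : 𝔸 n)
    (hf : ∀ x, (f x : ℝ) = a (realPoint x)) : IsPiecewiseAffine f :=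
  ⟨{(∅, a)}, fun _ => ⟨_, Finset.mem_singleton_self _, by simp [polyhedron]⟩,
    fun c hc x _ => by rw [Finset.mem_singleton.1 hc, hf]⟩

lemma IsPiecewiseAffine.neg {f : (Fin n → UI) → UI} (hf : IsPiecewiseAffine f) :
    IsPiecewiseAffine fun x => mneg (f x) := by
  obtain ⟨cells, hcover, hval⟩ := hf
  refine ⟨cells.image fun c => (c.1, AffineMap.const ℝ _ (1 : ℝ) - c.2), fun x => ?_, ?_⟩
  · obtain ⟨c, hc, hx⟩ := hcover x
    exact ⟨_, Finset.mem_image_of_mem _ hc, hx⟩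
  · simp only [Finset.mem_image, forall_exists_index, and_imp]
    rintro _ c hc rfl x hx
    simp [mneg, hval c hc x hx]

lemma IsPiecewiseAffine.add {f g : (Fin n → UI) → UI} (hf : IsPiecewiseAffine f)
    (hg : IsPiecewiseAffine g) : IsPiecewiseAffine fun x => oplus (f x) (g x) := by
  obtain ⟨C, hCcover, hC⟩ := hf
  obtain ⟨D, hDcover, hD⟩ := hg
  -- each common cell is split by the hyperplane where `f + g = 1`
  let one : 𝔸 n := AffineMap.const ℝ _ 1
  let split : (Finset (𝔸 n) × 𝔸 n) × (Finset (𝔸 n) × 𝔸 n) → Finset (Finset (𝔸 n) × 𝔸 n) :=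
    fun cd => {(cd.1.1 ∪ cd.2.1 ∪ {cd.1.2 + cd.2.2 - one}, cd.1.2 + cd.2.2),
      (cd.1.1 ∪ cd.2.1 ∪ {one - (cd.1.2 + cd.2.2)}, one)}
  refine ⟨(C ×ˢ D).biUnion split, fun x => ?_, ?_⟩
  · obtain ⟨⟨s, a⟩, hc, hxs⟩ := hCcover x
    obtain ⟨⟨t, b⟩, hd, hxt⟩ := hDcover x
    have hsplit : ∀ e ∈ split ((s, a), (t, b)), e ∈ (C ×ˢ D).biUnion split := fun e he =>
      Finset.mem_biUnion.2 ⟨_, Finset.mem_product.2 ⟨hc, hd⟩, he⟩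
    rcases le_total (a (realPoint x) + b (realPoint x)) 1 with hle | hge
    · refine ⟨_, hsplit _ (Finset.mem_insert_self _ _), ?_⟩
      rw [polyhedron_union, polyhedron_union, polyhedron_singleton]
      exact ⟨⟨hxs, hxt⟩, by simpa [one] using hle⟩
    · refine ⟨_, hsplit _ (Finset.mem_insert_of_mem (Finset.mem_singleton_self _)), ?_⟩
      rw [polyhedron_union, polyhedron_union, polyhedron_singleton]
      exact ⟨⟨hxs, hxt⟩, by simpa [one] using hge⟩
  · simp only [split, Finset.mem_biUnion, Finset.mem_product, Finset.mem_insert,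
      Finset.mem_singleton, Prod.exists]
    rintro _ ⟨s, a, t, b, ⟨hc, hd⟩, rfl | rfl⟩ x hx <;>
      dsimp only at hx <;>
      rw [polyhedron_union, polyhedron_union, polyhedron_singleton] at hx <;>
      obtain ⟨⟨hxs, hxt⟩, hcut⟩ := hx <;>
      simp only [one, mem_ofPred_eq, AffineMap.coe_sub, AffineMap.coe_add, AffineMap.coe_const,
        Pi.sub_apply, Pi.add_apply, Function.const_apply] at hcut <;>
      simp [_root_.oplus, one, hC _ hc x hxs, hD _ hd x hxt] <;>
      linarith

lemma IsTerm.isPiecewiseAffine {f : (Fin n → UI) → UI} (hf : IsTerm n f) :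
    IsPiecewiseAffine f := by
  induction hf with
  | proj i => exact isPiecewiseAffine_of_eq_affine (LinearMap.proj i).toAffineMap fun x => rfl
  | zero => exact isPiecewiseAffine_of_eq_affine 0 fun x => rfl
  | add _ _ hf hg => exact hf.add hg
  | neg _ hf => exact hf.neg

theorem IsPiecewiseAffine.exists_le_natCast_mul {f g : (Fin n → UI) → UI}
    (hf : IsPiecewiseAffine f) (hg : IsPiecewiseAffine g)
    (hfg : ∀ x, (g x : ℝ) = 0 → (f x : ℝ) = 0) : ∃ m : ℕ, ∀ x, (f x : ℝ) ≤ m * g x := by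
  obtain ⟨C, hCcover, hC⟩ := hf
  obtain ⟨D, hDcover, hD⟩ := hg
  have hcell : ∀ cd ∈ C ×ˢ D, ∀ᶠ m : ℕ in atTop,
      ∀ v ∈ polyhedron (cubeConstraints n ∪ (cd.1.1 ∪ cd.2.1)), cd.1.2 v ≤ m * cd.2.2 v := by
    rintro ⟨⟨s, p⟩, ⟨t, q⟩⟩ hcd
    obtain ⟨hc, hd⟩ := Finset.mem_product.1 hcd
    have hvalues : ∀ v ∈ polyhedron (cubeConstraints n ∪ (s ∪ t)),
        ∃ x, (f x : ℝ) = p v ∧ (g x : ℝ) = q v := by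
      intro v hv
      rw [polyhedron_union, polyhedron_union, ← range_realPoint] at hv
      obtain ⟨⟨x, rfl⟩, hxs, hxt⟩ := hv
      exact ⟨x, hC _ hc x hxs, hD _ hd x hxt⟩
    refine eventually_le_natCast_mul_of_extremePoints
      (isCompact_polyhedron_cubeConstraints_union _) (convex_polyhedron _)
      (finite_extremePoints_polyhedron _) p q (fun v hv => ?_) fun v hv => ?_
    · obtain ⟨x, -, hgx⟩ := hvalues v hv.1
      exact hgx ▸ (g x).2.1
    · obtain ⟨x, hfx, hgx⟩ := hvalues v hv.1
      exact hfx ▸ hgx ▸ hfg x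
  obtain ⟨m, hm⟩ := ((Finset.eventually_all _).2 hcell).exists
  refine ⟨m, fun x => ?_⟩
  obtain ⟨c, hc, hxc⟩ := hCcover x
  obtain ⟨d, hd, hxd⟩ := hDcover x
  rw [hC c hc x hxc, hD d hd x hxd]
  refine hm (c, d) (Finset.mem_product.2 ⟨hc, hd⟩) _ ?_
  rw [polyhedron_union, polyhedron_union, ← range_realPoint]
  exact ⟨mem_range_self x, hxc, hxd⟩

end PiecewiseAffine

section Ideal

variable {n : ℕ}

lemma IsTerm.subUI {f g : (Fin n → UI) → UI} (hf : IsTerm n f) (hg : IsTerm n g) :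
    IsTerm n fun x => subUI (f x) (g x) :=
  .neg (.add (.neg hf) hg)

lemma coe_oplus_subUI_subUI_eq_zero {a b : UI} (hab : (a : ℝ) = b) :
    (oplus (subUI a b) (subUI b a) : ℝ) = 0 := by
  simp [oplus, subUI, mneg, hab]

def mvSum (l : List ((Fin n → UI) → UI)) : (Fin n → UI) → UI :=
  l.foldr (fun p q => fun x => oplus (p x) (q x)) (fun _ => zeroUI)

lemma IsTerm.mvSum {l : List ((Fin n → UI) → UI)} (hl : ∀ s ∈ l, IsTerm n s) :
    IsTerm n (mvSum l) := by
  induction l with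
  | nil => exact .zero
  | cons s l ih => exact .add (hl s List.mem_cons_self) (ih fun t ht => hl t (.tail s ht))

lemma coe_mvSum_apply (l : List ((Fin n → UI) → UI)) (x : Fin n → UI) :
    (mvSum l x : ℝ) = min (l.map fun s => (s x : ℝ)).sum 1 := by
  induction l with
  | nil => simp [mvSum, zeroUI]
  | cons s l ih =>
    change min ((s x : ℝ) + mvSum l x) 1 = _
    rw [ih, List.map_cons, List.sum_cons, ← min_add_add_left, min_assoc]
    congr 1
    exact min_eq_right (le_add_of_nonneg_left (s x).2.1)

lemma coe_mvSum_apply_eq_zero {l : List ((Fin n → UI) → UI)} {x : Fin n → UI} :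
    (mvSum l x : ℝ) = 0 ↔ ∀ s ∈ l, (s x : ℝ) = 0 := by
  induction l with
  | nil => simp [mvSum, zeroUI]
  | cons s l ih =>
    change min ((s x : ℝ) + mvSum l x) 1 = 0 ↔ _
    rw [List.forall_mem_cons, ← ih, ← add_eq_zero_iff_of_nonneg (s x).2.1 (mvSum l x).2.1]
    constructor
    · intro h0
      rcases min_choice ((s x : ℝ) + mvSum l x) 1 with hmin | hmin <;> rw [hmin] at h0
      · exact h0
      · exact absurd h0 one_ne_zero
    · intro h0
      rw [h0, min_eq_left zero_le_one]

lemma inIdealGen_of_le_natCast_mul {S : Set ((Fin n → UI) → UI)} {l : List ((Fin n → UI) → UI)}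
    (hl : ∀ s ∈ l, s ∈ S) {g : (Fin n → UI) → UI} (hg : IsTerm n g) {m : ℕ}
    (hgm : ∀ x, (g x : ℝ) ≤ m * mvSum l x) : InIdealGen n S g := by
  refine ⟨hg, (List.replicate m l).flatten, fun s hs => ?_, fun x => ?_⟩
  · obtain ⟨l', hl', hs⟩ := List.mem_flatten.1 hs
    exact hl s (List.eq_of_mem_replicate hl' ▸ hs)
  · change (g x : ℝ) ≤ mvSum _ x
    rw [coe_mvSum_apply, List.map_flatten, List.sum_flatten, List.map_replicate,
      List.map_replicate, List.sum_replicate, nsmul_eq_mul]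
    refine le_min ((hgm x).trans ?_) (g x).2.2
    rw [coe_mvSum_apply]
    exact mul_le_mul_of_nonneg_left (min_le_left _ _) m.cast_nonneg

end Ideal

theorem stmt15 (n : ℕ) (S₁ S₂ : Set ((Fin n → UI) → UI))
    (hS₁ : S₁.Finite) (hS₂ : S₂.Finite)
    (hS₁t : ∀ g ∈ S₁, IsTerm n g) (hS₂t : ∀ g ∈ S₂, IsTerm n g)
    (h h' : (Fin n → UI) → UI) (hh : IsTerm n h) (hh' : IsTerm n h')
    (heq : ∀ x : Fin n → UI, (∀ g ∈ S₁, (g x).1 = 0) → (∀ g ∈ S₂, (g x).1 = 0) →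
      (h x).1 = (h' x).1) :
    InIdealGen n (S₁ ∪ S₂) (fun x => oplus (subUI (h x) (h' x)) (subUI (h' x) (h x))) := by
  set gens := (hS₁.union hS₂).toFinset.toList
  have hgens : ∀ s ∈ gens, s ∈ S₁ ∪ S₂ := by simp [gens]
  have hdist : IsTerm n fun x => oplus (subUI (h x) (h' x)) (subUI (h' x) (h x)) :=
    .add (hh.subUI hh') (hh'.subUI hh)
  have hsum : IsTerm n (mvSum gens) :=
    .mvSum fun s hs => (hgens s hs).elim (hS₁t s) (hS₂t s)
  have hzero : ∀ x, (mvSum gens x : ℝ) = 0 →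
      (oplus (subUI (h x) (h' x)) (subUI (h' x) (h x)) : ℝ) = 0 := by
    intro x hx
    rw [coe_mvSum_apply_eq_zero] at hx
    exact coe_oplus_subUI_subUI_eq_zero (heq x (fun g hg => hx g (by simp [gens, hg]))
      fun g hg => hx g (by simp [gens, hg]))
  obtain ⟨m, hm⟩ := hdist.isPiecewiseAffine.exists_le_natCast_mul hsum.isPiecewiseAffine hzero
  exact inIdealGen_of_le_natCast_mul hgens hdist hm
end
end
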